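/- Let Σ = XX^T and Λ = YY^T with X, Y ∈ Mat(n), and let R ∈ O(n) be such that H = X^T Y R^T is symmetric positive semi-definite. Then the curve γ(t) = (1−t)²Σ + t²Λ + 2t(1−t)·sym(XRY^T) satisfies γ(t) = c(t)c(t)^T where c(t) = (1−t)X + tYR^T, so γ(t) is PSD for all t ∈ [0,1], and the Frobenius length of c on [0,1], namely ‖YR^T − X‖, equals the Bures-Wasserstein distance d_BW(Σ,Λ). -/

import Mathlib

open Matrix

open Classical in
/-- The symmetric PSD square root of a PSD matrix (junk value `0` otherwise). -/
noncomputable def psdSqrt {n : ℕ} (A : Matrix (Fin n) (Fin n) ℝ) : Matrix (Fin n) (Fin n) ℝ :=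
  if h : A.PosSemidef then
    (h.1.eigenvectorUnitary : Matrix (Fin n) (Fin n) ℝ) *
      diagonal (fun i => √(h.1.eigenvalues i)) *
      (star h.1.eigenvectorUnitary : Matrix (Fin n) (Fin n) ℝ)
  else 0

/-- Frobenius (Euclidean) distance between matrices. -/
noncomputable def frobDist {m k : ℕ} (A B : Matrix (Fin m) (Fin k) ℝ) : ℝ :=
  Real.sqrt (((A - B)ᵀ * (A - B)).trace)


/-- Symmetric part of a square matrix. -/
noncomputable def symPart {n : ℕ} (M : Matrix (Fin n) (Fin n) ℝ) : Matrix (Fin n) (Fin n) ℝ :=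
  (1 / 2 : ℝ) • (M + Mᵀ)

/-!
Put `Z = Y Rᵀ`, so that `Z Zᵀ = Λ` and `Xᵀ Z = H`. Then `γ(t) = c(t) c(t)ᵀ` is a Gram matrix and
`‖Z - X‖² = tr Σ + tr Λ - 2 tr H`. For `A = Σ^{1/2} Z` we have `A Aᵀ = Σ^{1/2} Λ Σ^{1/2}` and
`Aᵀ A = Zᵀ Σ Z = Hᵀ H = H²`, so `H = (Aᵀ A)^{1/2}` by uniqueness of PSD square roots. Since `A Aᵀ` and
`Aᵀ A` have the same characteristic polynomial, their square roots have the same trace, which gives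
`tr (Σ^{1/2} Λ Σ^{1/2})^{1/2} = tr H`.
-/

namespace Matrix

theorem IsHermitian.trace_cfc_eq_of_charpoly_eq {𝕜 ι : Type*} [RCLike 𝕜] [Fintype ι]
    [DecidableEq ι] {A B : Matrix ι ι 𝕜} (hA : A.IsHermitian) (hB : B.IsHermitian)
    (h : A.charpoly = B.charpoly) (f : ℝ → ℝ) : (cfc f A).trace = (cfc f B).trace := by
  have hAB := (hA.eigenvalues_eq_eigenvalues_iff hB).mpr h
  rw [hA.cfc_eq, hB.cfc_eq, IsHermitian.cfc, IsHermitian.cfc]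
  simp only [Unitary.conjStarAlgAut_apply]
  rw [trace_mul_cycle, trace_mul_cycle (B := diagonal _)]
  simp [hAB]

section psdSqrt

open scoped MatrixOrder

variable {n : ℕ}

theorem PosSemidef.psdSqrt_eq_cfcSqrt {A : Matrix (Fin n) (Fin n) ℝ} (hA : A.PosSemidef) :
    psdSqrt A = CFC.sqrt A := by
  rw [psdSqrt, dif_pos hA, CFC.sqrt_eq_cfc, cfc_nnreal_eq_real _ A hA.nonneg, hA.1.cfc_eq,
    IsHermitian.cfc, Unitary.conjStarAlgAut_apply]
  congr 3 with i
  simp [max_eq_left (hA.eigenvalues_nonneg i)]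

theorem posSemidef_psdSqrt (A : Matrix (Fin n) (Fin n) ℝ) : (psdSqrt A).PosSemidef := by
  by_cases hA : A.PosSemidef
  · rw [hA.psdSqrt_eq_cfcSqrt]
    exact (CFC.sqrt_nonneg A).posSemidef
  · rw [psdSqrt, dif_neg hA]
    exact PosSemidef.zero

theorem PosSemidef.psdSqrt_mul_self {A : Matrix (Fin n) (Fin n) ℝ} (hA : A.PosSemidef) :
    psdSqrt A * psdSqrt A = A := by
  rw [hA.psdSqrt_eq_cfcSqrt]
  exact CFC.sqrt_mul_sqrt_self A hA.nonneg

theorem PosSemidef.psdSqrt_eq_of_mul_self_eq {A B : Matrix (Fin n) (Fin n) ℝ}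
    (hB : B.PosSemidef) (h : B * B = A) : psdSqrt A = B := by
  have hA : A.PosSemidef := by
    rw [← h]
    simpa only [hB.1.eq] using posSemidef_conjTranspose_mul_self B
  rw [hA.psdSqrt_eq_cfcSqrt]
  exact CFC.sqrt_unique h hB.nonneg

theorem trace_psdSqrt_mul_transpose (A : Matrix (Fin n) (Fin n) ℝ) :
    (psdSqrt (A * Aᵀ)).trace = (psdSqrt (Aᵀ * A)).trace := by
  have hAAt : (A * Aᵀ).PosSemidef := by simpa using posSemidef_self_mul_conjTranspose A
  have hAtA : (Aᵀ * A).PosSemidef := by simpa using posSemidef_conjTranspose_mul_self A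
  rw [hAAt.psdSqrt_eq_cfcSqrt, hAtA.psdSqrt_eq_cfcSqrt, CFC.sqrt_eq_real_sqrt _ hAAt.nonneg,
    CFC.sqrt_eq_real_sqrt _ hAtA.nonneg, cfcₙ_eq_cfc, cfcₙ_eq_cfc]
  exact hAAt.1.trace_cfc_eq_of_charpoly_eq hAtA.1 (charpoly_mul_comm A Aᵀ) _

theorem trace_psdSqrt_sandwich_of_posSemidef {X Z : Matrix (Fin n) (Fin n) ℝ}
    (hXZ : (Xᵀ * Z).PosSemidef) :
    (psdSqrt (psdSqrt (X * Xᵀ) * (Z * Zᵀ) * psdSqrt (X * Xᵀ))).trace = (Xᵀ * Z).trace := by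
  set S := psdSqrt (X * Xᵀ)
  have hS : Sᵀ = S := (posSemidef_psdSqrt _).1.eq
  have hSS : S * S = X * Xᵀ := (posSemidef_self_mul_conjTranspose X).psdSqrt_mul_self
  have hA : S * (Z * Zᵀ) * S = S * Z * (S * Z)ᵀ := by
    rw [transpose_mul, hS]
    simp only [Matrix.mul_assoc]
  have hH : (Xᵀ * Z)ᵀ = Xᵀ * Z := hXZ.1.eq
  have hAt : (S * Z)ᵀ * (S * Z) = (Xᵀ * Z) * (Xᵀ * Z) := by
    calc (S * Z)ᵀ * (S * Z) = (Xᵀ * Z)ᵀ * (Xᵀ * Z) := by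
          rw [transpose_mul, hS, transpose_mul, transpose_transpose, Matrix.mul_assoc,
            ← Matrix.mul_assoc S, hSS]
          simp only [Matrix.mul_assoc]
      _ = (Xᵀ * Z) * (Xᵀ * Z) := by rw [hH]
  rw [hA, trace_psdSqrt_mul_transpose, hXZ.psdSqrt_eq_of_mul_self_eq hAt.symm]

end psdSqrt

theorem smul_add_smul_mul_transpose {n : ℕ} (a b : ℝ) (X Z : Matrix (Fin n) (Fin n) ℝ) :
    (a • X + b • Z) * (a • X + b • Z)ᵀ
      = a ^ 2 • (X * Xᵀ) + b ^ 2 • (Z * Zᵀ) + (2 * a * b) • symPart (X * Zᵀ) := by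
  simp only [symPart, transpose_add, transpose_smul, transpose_mul, transpose_transpose,
    Matrix.add_mul, Matrix.mul_add, Matrix.smul_mul, Matrix.mul_smul, smul_add]
  module

theorem frobDist_eq_sqrt_trace {m k : ℕ} (Z X : Matrix (Fin m) (Fin k) ℝ) :
    frobDist Z X = √((Z * Zᵀ).trace + (X * Xᵀ).trace - 2 * (Xᵀ * Z).trace) := by
  rw [frobDist, transpose_sub, Matrix.sub_mul, Matrix.mul_sub, Matrix.mul_sub, trace_sub,
    trace_sub, trace_sub, trace_mul_comm Zᵀ Z, trace_mul_comm Xᵀ X, ← trace_transpose (Zᵀ * X),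
    transpose_mul, transpose_transpose]
  congr 1
  ring

end Matrix

theorem minimizing_geodesic_segment (n : ℕ) (X Y R : Matrix (Fin n) (Fin n) ℝ)
    (hR : Rᵀ * R = 1) (hH : (Xᵀ * Y * Rᵀ).PosSemidef) :
    (∀ t : ℝ,
        (1 - t) ^ 2 • (X * Xᵀ) + t ^ 2 • (Y * Yᵀ)
            + (2 * t * (1 - t)) • symPart (X * R * Yᵀ)
          = ((1 - t) • X + t • (Y * Rᵀ)) * ((1 - t) • X + t • (Y * Rᵀ))ᵀ) ∧
    (∀ t ∈ Set.Icc (0 : ℝ) 1,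
        ((1 - t) ^ 2 • (X * Xᵀ) + t ^ 2 • (Y * Yᵀ)
            + (2 * t * (1 - t)) • symPart (X * R * Yᵀ)).PosSemidef) ∧
    frobDist (Y * Rᵀ) X
      = Real.sqrt ((X * Xᵀ + Y * Yᵀ
          - 2 • psdSqrt (psdSqrt (X * Xᵀ) * (Y * Yᵀ) * psdSqrt (X * Xᵀ))).trace) := by
  have hΛ : Y * Rᵀ * (Y * Rᵀ)ᵀ = Y * Yᵀ := by
    rw [transpose_mul, transpose_transpose, Matrix.mul_assoc, ← Matrix.mul_assoc Rᵀ, hR,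
      Matrix.one_mul]
  have hXRY : X * (Y * Rᵀ)ᵀ = X * R * Yᵀ := by
    rw [transpose_mul, transpose_transpose, Matrix.mul_assoc]
  have hcurve : ∀ t : ℝ,
      (1 - t) ^ 2 • (X * Xᵀ) + t ^ 2 • (Y * Yᵀ) + (2 * t * (1 - t)) • symPart (X * R * Yᵀ)
        = ((1 - t) • X + t • (Y * Rᵀ)) * ((1 - t) • X + t • (Y * Rᵀ))ᵀ := fun t => by
    rw [smul_add_smul_mul_transpose, hΛ, hXRY, mul_right_comm 2 t]
  refine ⟨hcurve, fun t _ => hcurve t ▸ posSemidef_self_mul_conjTranspose _, ?_⟩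
  rw [Matrix.mul_assoc] at hH
  rw [frobDist_eq_sqrt_trace, trace_sub, trace_add, trace_smul, ← hΛ,
    trace_psdSqrt_sandwich_of_posSemidef hH, nsmul_eq_mul]
  congr 1
  ring
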